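/- arXiv:2501.17504 — 4 statements merged into one kernel-verified Lean document; each statement's English description precedes it below -/
import Mathlib

section
/- Let g be a complex orthogonal matrix, i.e. g ∈ GL(n,ℂ) with gᵗg = id, and let D = diag(λ_1,…,λ_n) with λ_1,…,λ_n ∈ ℂ pairwise distinct. If gᵗDg is a diagonal matrix, then g is a signed permutation matrix: g has exactly one nonzero entry in each row and each column and that entry is ±1. -/
open Matrix

/-- A matrix is a *signed permutation matrix* if it has exactly one nonzero entry in each
row and each column, and every nonzero entry equals `1` or `-1`. -/
def IsSignedPerm {n : ℕ} {R : Type*} [Ring R] (g : Matrix (Fin n) (Fin n) R) : Prop :=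
  (∀ i, ∃! j, g i j ≠ 0) ∧ (∀ j, ∃! i, g i j ≠ 0) ∧ ∀ i j, g i j ≠ 0 → g i j = 1 ∨ g i j = -1

/-- **Statement 4.** If `g` is a complex orthogonal matrix (`gᵀ g = 1`) and
`D = diag(λ₁,…,λₙ)` has pairwise distinct diagonal entries, and `gᵀ D g` is diagonal,
then `g` is a signed permutation matrix. -/
theorem stmt4 {n : ℕ} (g : Matrix (Fin n) (Fin n) ℂ) (hg : gᵀ * g = 1)
    (lam : Fin n → ℂ) (hlam : Function.Injective lam)
    (hdiag : (gᵀ * Matrix.diagonal lam * g).IsDiag) :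
    IsSignedPerm g := by
  have h1 : g * gᵀ = 1 := mul_eq_one_comm.mp hg
  set M := gᵀ * Matrix.diagonal lam * g with hM
  have hcomm : Matrix.diagonal lam * g = g * M := by
    rw [hM, ← mul_assoc, ← mul_assoc, h1, one_mul]
  have key : ∀ i j, g i j ≠ 0 → lam i = M j j := by
    intro i j hij
    have h := congrFun (congrFun hcomm i) j
    rw [Matrix.diagonal_mul, Matrix.mul_apply] at h
    rw [Finset.sum_eq_single j (fun k _ hk => by rw [hdiag hk, mul_zero])
      (fun hj => absurd (Finset.mem_univ j) hj)] at h
    have : lam i * g i j = M j j * g i j := by rw [h]; ring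
    exact mul_right_cancel₀ hij this
  have colsum : ∀ j, ∑ i, g i j * g i j = 1 := by
    intro j
    have h := congrFun (congrFun hg j) j
    simpa [Matrix.mul_apply, Matrix.transpose_apply, Matrix.one_apply] using h
  have colex : ∀ j, ∃ i, g i j ≠ 0 := by
    intro j
    by_contra h
    push_neg at h
    have : (1 : ℂ) = 0 := by rw [← colsum j]; simp [h]
    exact one_ne_zero this
  have coluniq : ∀ j i i', g i j ≠ 0 → g i' j ≠ 0 → i = i' := fun j i i' h h' =>
    hlam ((key i j h).trans (key i' j h').symm)
  choose σ hσ using colex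
  have σinj : Function.Injective σ := by
    intro j k hjk
    by_contra hne
    have h0 : ∑ i, g i j * g i k = 0 := by
      have h := congrFun (congrFun hg j) k
      simpa [Matrix.mul_apply, Matrix.transpose_apply, Matrix.one_apply, hne] using h
    rw [Finset.sum_eq_single (σ j) (fun b _ hb => by
        by_cases hbj : g b j = 0
        · rw [hbj, zero_mul]
        · exact absurd (coluniq j b (σ j) hbj (hσ j)) hb)
      (fun hj => absurd (Finset.mem_univ _) hj)] at h0
    have hk : g (σ j) k ≠ 0 := by rw [hjk]; exact hσ k
    exact mul_ne_zero (hσ j) hk h0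
  have σsurj : Function.Surjective σ := Finite.surjective_of_injective σinj
  refine ⟨?_, ?_, ?_⟩
  · intro i
    obtain ⟨j, hj⟩ := σsurj i
    refine ⟨j, by rw [← hj]; exact hσ j, fun j' hj' => ?_⟩
    have : i = σ j' := coluniq j' i (σ j') hj' (hσ j')
    exact σinj (by rw [← this, hj])
  · intro j
    exact ⟨σ j, hσ j, fun i hi => coluniq j i (σ j) hi (hσ j)⟩
  · intro i j hij
    have hi : i = σ j := coluniq j i (σ j) hij (hσ j)
    have hsum : ∑ k, g k j * g k j = g i j * g i j := by
      apply Finset.sum_eq_single i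
      · intro b _ hb
        by_cases hbj : g b j = 0
        · rw [hbj, zero_mul]
        · exact absurd ((coluniq j b i hbj hij)) hb
      · exact fun h => absurd (Finset.mem_univ _) h
    have : g i j * g i j = 1 := by rw [← hsum, colsum j]
    exact mul_self_eq_one_iff.mp this
end

section
/- Let μ ∈ ℕ_0^n be a multi-index with Σ_i μ_i = 2d having at least three odd entries. Then Δ^{d−1}(x^μ) = 0, where x^μ = Π_i x_i^{μ_i}. -/
/-!
`Δ` sends `x^ν` to a combination of the monomials `x^(ν - 2eᵢ)`, so every monomial `x^ν` of
`Δ^k x^μ` satisfies `ν + 2w = μ` for some `w` of degree `k`. Then `ν` has the same odd entries as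
`μ`, at least three, while for `k = d - 1` its degree is `2d - 2(d - 1) ≤ 2`.
-/

open MvPolynomial

/-- The Laplacian operator `Δ = ∑ i, ∂²/∂xᵢ²` on `ℝ[x₁,…,xₙ]`. -/
noncomputable def lap {n : ℕ} (p : MvPolynomial (Fin n) ℝ) : MvPolynomial (Fin n) ℝ :=
  ∑ i, pderiv i (pderiv i p)

open Finsupp Finset

theorem Finset.card_filter_odd_le_sum {ι : Type*} [Fintype ι] (f : ι → ℕ) :
    #{i | Odd (f i)} ≤ ∑ i, f i :=
  calc #{i | Odd (f i)} = ∑ _ ∈ {i | Odd (f i)}, 1 := card_eq_sum_ones _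
    _ ≤ ∑ i ∈ {i | Odd (f i)}, f i := sum_le_sum fun _ hi => (mem_filter.1 hi).2.pos
    _ ≤ ∑ i, f i := sum_le_sum_of_subset (subset_univ _)

namespace MvPolynomial

theorem prod_X_pow_eq_monomial_sum_single {σ R : Type*} [Fintype σ] [CommSemiring R]
    (μ : σ → ℕ) : ∏ i, (X i : MvPolynomial σ R) ^ μ i = monomial (∑ i, single i (μ i)) 1 := by
  simp_rw [X_pow_eq_monomial, monomial_sum_one]

theorem add_single_two_mem_support_of_mem_support_pderiv_pderiv {σ R : Type*} [CommSemiring R]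
    {p : MvPolynomial σ R} {i : σ} {ν : σ →₀ ℕ} (h : ν ∈ (pderiv i (pderiv i p)).support) :
    ν + single i 2 ∈ p.support := by
  rw [mem_support_iff, coeff_pderiv, coeff_pderiv, add_assoc, ← single_add] at *
  exact left_ne_zero_of_mul (left_ne_zero_of_mul h)

end MvPolynomial

theorem exists_add_single_two_mem_support_of_mem_support_lap {n : ℕ}
    {p : MvPolynomial (Fin n) ℝ} {ν : Fin n →₀ ℕ} (h : ν ∈ (lap p).support) :
    ∃ i, ν + single i 2 ∈ p.support := by
  classical
  obtain ⟨i, -, hi⟩ := mem_biUnion.1 (MvPolynomial.support_sum h)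
  exact ⟨i, add_single_two_mem_support_of_mem_support_pderiv_pderiv hi⟩

theorem exists_add_two_nsmul_mem_support_of_mem_support_lap_iterate {n : ℕ} (k : ℕ)
    {p : MvPolynomial (Fin n) ℝ} {ν : Fin n →₀ ℕ} (h : ν ∈ (lap^[k] p).support) :
    ∃ w : Fin n →₀ ℕ, w.degree = k ∧ ν + 2 • w ∈ p.support := by
  induction k generalizing p with
  | zero => exact ⟨0, by simp, by simpa using h⟩
  | succ k ih =>
    rw [Function.iterate_succ_apply] at h
    obtain ⟨w, hw, hνw⟩ := ih h
    obtain ⟨i, hi⟩ := exists_add_single_two_mem_support_of_mem_support_lap hνw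
    refine ⟨w + single i 1, by simp [hw], ?_⟩
    rwa [smul_add, smul_single, smul_eq_mul, mul_one, ← add_assoc]

/-- If `μ ∈ ℕ₀ⁿ` sums to `2d` and has at least three odd entries, then
`Δ^{d−1}(xᵘ) = 0`. -/
theorem stmt6 {n d : ℕ} (μ : Fin n → ℕ) (hsum : ∑ i, μ i = 2 * d)
    (hodd : 3 ≤ (Finset.univ.filter fun i => Odd (μ i)).card) :
    lap^[d - 1] (∏ i, (X i : MvPolynomial (Fin n) ℝ) ^ μ i) = 0 := by
  classical
  rw [prod_X_pow_eq_monomial_sum_single]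
  by_contra hne
  obtain ⟨ν, hν⟩ := support_nonempty.2 hne
  obtain ⟨w, hw, hνw⟩ := exists_add_two_nsmul_mem_support_of_mem_support_lap_iterate _ hν
  have hμ : ∀ i, μ i = ν i + 2 * w i := by
    intro i
    have h := DFunLike.congr_fun (mem_singleton.1 (support_monomial_subset hνw)) i
    rw [coe_univ_sum_single] at h
    simpa using h.symm
  have hdeg : ∑ i, ν i + 2 * (d - 1) = 2 * d := by
    rw [← hsum, ← hw, degree_eq_sum, Finset.mul_sum, ← sum_add_distrib]
    exact sum_congr rfl fun i _ => (hμ i).symm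
  have hpar : #{i | Odd (μ i)} = #{i | Odd (ν i)} := by
    simp [hμ, Nat.odd_add]
  have := card_filter_odd_le_sum ν
  omega
end

section
/- Let μ ∈ ℕ_0^n be a multi-index with Σ_i μ_i = 2d all of whose entries are even. Then the polynomial m_μ := binom(2d,μ)·x^μ − Σ_{i: μ_i ≠ 0} binom(d−1, μ/2 − ε_i)·x_i^{2d} satisfies Δ^{d−1}(m_μ) = 0. -/
open MvPolynomial Finset
open scoped Nat

lemma lap_add {n : ℕ} (p q : MvPolynomial (Fin n) ℝ) : lap (p + q) = lap p + lap q := by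
  simp [lap, Finset.sum_add_distrib]

lemma lap_smul {n : ℕ} (a : ℝ) (p : MvPolynomial (Fin n) ℝ) : lap (a • p) = a • lap p := by
  simp [lap, Finset.smul_sum]

lemma lap_sub {n : ℕ} (p q : MvPolynomial (Fin n) ℝ) : lap (p - q) = lap p - lap q := by
  simp [lap, Finset.sum_sub_distrib]

lemma lap_sum {n : ℕ} {α : Type*} (s : Finset α) (f : α → MvPolynomial (Fin n) ℝ) :
    lap (∑ i ∈ s, f i) = ∑ i ∈ s, lap (f i) := by
  simp [lap]
  rw [Finset.sum_comm]

lemma lap_monomial {n : ℕ} (s : Fin n →₀ ℕ) (a : ℝ) :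
    lap (monomial s a) = ∑ i, monomial (s - Finsupp.single i 2)
      (a * (s i) * ((s i - 1 : ℕ))) := by
  unfold lap
  refine Finset.sum_congr rfl fun i _ => ?_
  rw [pderiv_monomial, pderiv_monomial, tsub_tsub, ← Finsupp.single_add]
  rw [Finsupp.tsub_apply, Finsupp.single_eq_same]

lemma sum_sub_single {n : ℕ} (μ : Fin n → ℕ) (i : Fin n) (c : ℕ) (h : c ≤ μ i) :
    ∑ j, (μ j - if j = i then c else 0) = (∑ j, μ j) - c := by
  have h1 : ∑ j, (if j = i then c else 0) = c := by
    simp [Finset.sum_ite_eq' Finset.univ i (fun _ => c)]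
  have h2 : (∑ j, (μ j - if j = i then c else 0)) + c = ∑ j, μ j := by
    rw [← h1, ← Finset.sum_add_distrib]
    exact Finset.sum_congr rfl fun j _ => by by_cases hj : j = i <;> simp [hj] <;> omega
  omega

lemma multA {n : ℕ} (μ : Fin n → ℕ) (i : Fin n) (h2 : 2 ≤ μ i) :
    (Nat.multinomial Finset.univ μ : ℝ) * (μ i) * ((μ i - 1 : ℕ)) =
      (((∑ j, μ j : ℕ)) : ℝ) * (((∑ j, μ j) - 1 : ℕ)) *
        Nat.multinomial Finset.univ (fun k => μ k - if k = i then 2 else 0) := by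
  set μ' : Fin n → ℕ := fun k => μ k - if k = i then 2 else 0 with hμ'
  have hS : μ i ≤ ∑ j, μ j := Finset.single_le_sum (fun _ _ => Nat.zero_le _) (Finset.mem_univ i)
  obtain ⟨a, ha⟩ : ∃ a, μ i = a + 2 := ⟨μ i - 2, by omega⟩
  obtain ⟨T, hT⟩ : ∃ T, ∑ j, μ j = T + 2 := ⟨(∑ j, μ j) - 2, by omega⟩
  have hsum' : ∑ j, μ' j = T := by rw [hμ', sum_sub_single μ i 2 h2, hT]; omega
  set R : ℕ := ∏ j ∈ Finset.univ.erase i, (μ j)! with hR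
  have hprod : ∏ j, (μ j)! = (a + 2)! * R := by
    rw [← Finset.mul_prod_erase Finset.univ _ (Finset.mem_univ i), ha]
  have hprod' : ∏ j, (μ' j)! = a ! * R := by
    rw [← Finset.mul_prod_erase Finset.univ _ (Finset.mem_univ i)]
    have : μ' i = a := by simp [hμ', ha]
    rw [this]
    congr 1
    exact Finset.prod_congr rfl fun j hj => by
      simp [hμ', (Finset.mem_erase.mp hj).1]
  have hMP : (Nat.multinomial Finset.univ μ : ℝ) * ((a + 2)! * R) = (T + 2)! := by
    have := Nat.multinomial_spec Finset.univ μ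
    rw [hprod, hT] at this
    exact_mod_cast congrArg (Nat.cast (R := ℝ)) ((mul_comm _ _).trans this)
  have hM'P : (Nat.multinomial Finset.univ μ' : ℝ) * (a ! * R) = T ! := by
    have := Nat.multinomial_spec Finset.univ μ'
    rw [hprod', hsum'] at this
    exact_mod_cast congrArg (Nat.cast (R := ℝ)) ((mul_comm _ _).trans this)
  have hne : ((a ! : ℝ) * R) ≠ 0 := by
    have : 0 < R := Finset.prod_pos fun j _ => Nat.factorial_pos _
    positivity
  have hμi1 : ((μ i - 1 : ℕ) : ℝ) = (a : ℝ) + 1 := by rw [ha]; push_cast; ring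
  have hS1 : (((∑ j, μ j) - 1 : ℕ) : ℝ) = (T : ℝ) + 1 := by rw [hT]; push_cast; ring
  have hSr : ((∑ j, μ j : ℕ) : ℝ) = (T : ℝ) + 2 := by rw [hT]; push_cast; ring
  rw [hμi1, hS1, hSr, ha]
  push_cast
  apply mul_right_cancel₀ hne
  have e1 : ((a + 2)! : ℝ) = ((a:ℝ)+2)*((a:ℝ)+1)*(a)! := by
    push_cast [Nat.factorial_succ]; ring
  have e2 : ((T + 2)! : ℝ) = ((T:ℝ)+2)*((T:ℝ)+1)*(T)! := by
    push_cast [Nat.factorial_succ]; ring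
  calc (Nat.multinomial Finset.univ μ : ℝ) * ((a:ℝ)+2) * ((a:ℝ)+1) * ((a)! * R)
      = (Nat.multinomial Finset.univ μ : ℝ) * (((a:ℝ)+2)*((a:ℝ)+1)*(a)! * R) := by ring
    _ = (Nat.multinomial Finset.univ μ : ℝ) * (((a+2)! : ℝ) * R) := by rw [e1]
    _ = ((T+2)! : ℝ) := hMP
    _ = ((T:ℝ)+2)*((T:ℝ)+1)*((T)! : ℝ) := e2
    _ = ((T:ℝ)+2)*((T:ℝ)+1)*((Nat.multinomial Finset.univ μ' : ℝ) * ((a)! * R)) := by rw [hM'P]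
    _ = ((T:ℝ)+2)*((T:ℝ)+1)*(Nat.multinomial Finset.univ μ' : ℝ) * ((a)! * R) := by ring

lemma multB {n : ℕ} (ν : Fin n → ℕ) (i : Fin n) (h1 : 1 ≤ ν i) :
    (Nat.multinomial Finset.univ (fun k => ν k - if k = i then 1 else 0) : ℝ) *
        ((∑ j, ν j : ℕ)) =
      (Nat.multinomial Finset.univ ν : ℝ) * (ν i) := by
  set ν' : Fin n → ℕ := fun k => ν k - if k = i then 1 else 0 with hν'
  have hS : ν i ≤ ∑ j, ν j := Finset.single_le_sum (fun _ _ => Nat.zero_le _) (Finset.mem_univ i)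
  obtain ⟨a, ha⟩ : ∃ a, ν i = a + 1 := ⟨ν i - 1, by omega⟩
  obtain ⟨T, hT⟩ : ∃ T, ∑ j, ν j = T + 1 := ⟨(∑ j, ν j) - 1, by omega⟩
  have hsum' : ∑ j, ν' j = T := by rw [hν', sum_sub_single ν i 1 h1, hT]; omega
  set R : ℕ := ∏ j ∈ Finset.univ.erase i, (ν j)! with hR
  have hprod : ∏ j, (ν j)! = (a + 1)! * R := by
    rw [← Finset.mul_prod_erase Finset.univ _ (Finset.mem_univ i), ha]
  have hprod' : ∏ j, (ν' j)! = a ! * R := by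
    rw [← Finset.mul_prod_erase Finset.univ _ (Finset.mem_univ i)]
    have : ν' i = a := by simp [hν', ha]
    rw [this]
    congr 1
    exact Finset.prod_congr rfl fun j hj => by
      simp [hν', (Finset.mem_erase.mp hj).1]
  have hMP : (Nat.multinomial Finset.univ ν : ℝ) * ((a + 1)! * R) = (T + 1)! := by
    have := Nat.multinomial_spec Finset.univ ν
    rw [hprod, hT] at this
    exact_mod_cast congrArg (Nat.cast (R := ℝ)) ((mul_comm _ _).trans this)
  have hM'P : (Nat.multinomial Finset.univ ν' : ℝ) * (a ! * R) = T ! := by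
    have := Nat.multinomial_spec Finset.univ ν'
    rw [hprod', hsum'] at this
    exact_mod_cast congrArg (Nat.cast (R := ℝ)) ((mul_comm _ _).trans this)
  have hne : ((a ! : ℝ) * R) ≠ 0 := by
    have : 0 < R := Finset.prod_pos fun j _ => Nat.factorial_pos _
    positivity
  rw [hT, ha]
  push_cast
  apply mul_right_cancel₀ hne
  have e1 : ((a + 1)! : ℝ) = ((a:ℝ)+1)*(a)! := by push_cast [Nat.factorial_succ]; ring
  have e2 : ((T + 1)! : ℝ) = ((T:ℝ)+1)*(T)! := by push_cast [Nat.factorial_succ]; ring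
  calc (Nat.multinomial Finset.univ ν' : ℝ) * ((T:ℝ)+1) * ((a)! * R)
      = ((T:ℝ)+1) * ((Nat.multinomial Finset.univ ν' : ℝ) * ((a)! * R)) := by ring
    _ = ((T:ℝ)+1) * ((T)! : ℝ) := by rw [hM'P]
    _ = ((T+1)! : ℝ) := by rw [e2]
    _ = (Nat.multinomial Finset.univ ν : ℝ) * (((a+1)! : ℝ) * R) := hMP.symm
    _ = (Nat.multinomial Finset.univ ν : ℝ) * (((a:ℝ)+1)*(a)! * R) := by rw [e1]
    _ = (Nat.multinomial Finset.univ ν : ℝ) * ((a:ℝ)+1) * ((a)! * R) := by ring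

lemma pascal_sum {n : ℕ} (ν : Fin n → ℕ) (hpos : 1 ≤ ∑ j, ν j) :
    ∑ i, (if ν i ≠ 0 then
        (Nat.multinomial Finset.univ (fun k => ν k - if k = i then 1 else 0) : ℝ) else 0) =
      Nat.multinomial Finset.univ ν := by
  have hSne : ((∑ j, ν j : ℕ) : ℝ) ≠ 0 := by
    have : (∑ j, ν j : ℕ) ≠ 0 := by omega
    exact_mod_cast this
  apply mul_right_cancel₀ hSne
  rw [Finset.sum_mul]
  have : ∀ i : Fin n, (if ν i ≠ 0 then
      (Nat.multinomial Finset.univ (fun k => ν k - if k = i then 1 else 0) : ℝ) else 0) *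
        ((∑ j, ν j : ℕ)) = (Nat.multinomial Finset.univ ν : ℝ) * (ν i) := by
    intro i
    by_cases h : ν i = 0
    · simp [h]
    · rw [if_pos h, multB ν i (by omega)]
  rw [Finset.sum_congr rfl fun i _ => this i, ← Finset.mul_sum]
  congr 1
  push_cast
  rfl

noncomputable def toF {n : ℕ} (μ : Fin n → ℕ) : Fin n →₀ ℕ := Finsupp.equivFunOnFinite.symm μ

@[simp] lemma toF_apply {n : ℕ} (μ : Fin n → ℕ) (i : Fin n) : toF μ i = μ i := rfl

lemma prod_X_pow {n : ℕ} (μ : Fin n → ℕ) :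
    (∏ i, (X i : MvPolynomial (Fin n) ℝ) ^ μ i) = monomial (toF μ) 1 := by
  rw [← prod_X_pow_eq_monomial]
  symm
  apply Finset.prod_subset (Finset.subset_univ _)
  intro x _ hx
  have : μ x = 0 := by
    by_contra h
    exact hx (Finsupp.mem_support_iff.mpr (by simpa using h))
  simp [this]

lemma toF_sub {n : ℕ} (μ : Fin n → ℕ) (i : Fin n) :
    toF μ - Finsupp.single i 2 = toF (fun k => μ k - if k = i then 2 else 0) := by
  ext k
  rw [Finsupp.tsub_apply, toF_apply, toF_apply, Finsupp.single_apply]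
  by_cases h : k = i
  · subst h; simp
  · rw [if_neg h, if_neg (fun hh => h hh.symm)]

lemma lap_X_pow {n : ℕ} (i : Fin n) (m : ℕ) :
    lap ((X i : MvPolynomial (Fin n) ℝ) ^ m) =
      ((m : ℝ) * ((m - 1 : ℕ))) • (X i : MvPolynomial (Fin n) ℝ) ^ (m - 2) := by
  rw [X_pow_eq_monomial, lap_monomial]
  rw [Finset.sum_eq_single i]
  · rw [X_pow_eq_monomial, smul_monomial, ← Finsupp.single_tsub]
    congr 1
    simp [Finsupp.single_eq_same]
  · intro j _ hj
    rw [Finsupp.single_apply, if_neg (fun h => hj h.symm)]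
    simp
  · intro h
    exact absurd (Finset.mem_univ i) h

noncomputable def Mp {n : ℕ} (d : ℕ) (μ : Fin n → ℕ) : MvPolynomial (Fin n) ℝ :=
  (Nat.multinomial Finset.univ μ : ℝ) • ∏ i, (X i : MvPolynomial (Fin n) ℝ) ^ μ i -
    ∑ i ∈ Finset.univ.filter (fun i => μ i ≠ 0),
      (Nat.multinomial Finset.univ (fun j => μ j / 2 - if j = i then 1 else 0) : ℝ) •
        (X i : MvPolynomial (Fin n) ℝ) ^ (2 * d)

lemma Mp_base {n : ℕ} (μ : Fin n → ℕ) (hsum : ∑ i, μ i = 2) (heven : ∀ i, Even (μ i)) :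
    Mp 1 μ = 0 := by
  obtain ⟨i0, hi0⟩ : ∃ i, μ i ≠ 0 := by
    by_contra h
    push_neg at h
    rw [Finset.sum_eq_zero (fun i _ => h i)] at hsum
    omega
  have hle : μ i0 ≤ 2 := hsum ▸ Finset.single_le_sum (fun _ _ => Nat.zero_le _) (Finset.mem_univ i0)
  have h2 : μ i0 = 2 := by obtain ⟨c, hc⟩ := heven i0; omega
  have hz : ∀ j, j ≠ i0 → μ j = 0 := by
    intro j hj
    have hrest : ∑ k ∈ Finset.univ.erase i0, μ k = 0 := by
      have := Finset.add_sum_erase Finset.univ μ (Finset.mem_univ i0)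
      omega
    exact (Finset.sum_eq_zero_iff.mp hrest) j (Finset.mem_erase.mpr ⟨hj, Finset.mem_univ j⟩)
  have hprod : (∏ i, (X i : MvPolynomial (Fin n) ℝ) ^ μ i) = X i0 ^ 2 := by
    rw [Finset.prod_eq_single i0 (fun j _ hj => by rw [hz j hj, pow_zero])
      (fun h => absurd (Finset.mem_univ i0) h), h2]
  have hmult : Nat.multinomial Finset.univ μ = 1 := by
    have hp : ∏ j, (μ j)! = 2 := by
      rw [Finset.prod_eq_single i0 (fun j _ hj => by rw [hz j hj]; rfl)
        (fun h => absurd (Finset.mem_univ i0) h), h2]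
      decide
    have := Nat.multinomial_spec Finset.univ μ
    rw [hp, hsum] at this
    simp [Nat.factorial] at this
    omega
  have hfilter : Finset.univ.filter (fun i => μ i ≠ 0) = {i0} := by
    ext j
    simp only [Finset.mem_filter, Finset.mem_univ, true_and, Finset.mem_singleton]
    constructor
    · intro h; by_contra hj; exact h (hz j hj)
    · intro h; subst h; exact hi0
  have hinner : (fun j => μ j / 2 - if j = i0 then 1 else 0) = fun _ => 0 := by
    funext j
    by_cases h : j = i0
    · subst h; rw [h2]; simp
    · rw [hz j h]; simp
  rw [Mp, hprod, hmult, hfilter, Finset.sum_singleton, hinner]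
  have : Nat.multinomial (Finset.univ (α := Fin n)) (fun _ => 0) = 1 := by
    simp [Nat.multinomial]
  rw [this]
  norm_num

lemma claimB {n d : ℕ} (hd : 2 ≤ d) (μ : Fin n → ℕ) (hsum : ∑ i, μ i = 2 * d)
    (heven : ∀ i, Even (μ i)) (j : Fin n) :
    ∑ i, (if μ i ≠ 0 ∧ μ j - (if j = i then 2 else 0) ≠ 0 then
        (Nat.multinomial Finset.univ
          (fun k => (μ k - if k = i then 2 else 0) / 2 - if k = j then 1 else 0) : ℝ) else 0)
      = if μ j ≠ 0 then
          (Nat.multinomial Finset.univ (fun k => μ k / 2 - if k = j then 1 else 0) : ℝ) else 0 := by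
  have hl : ∀ k, μ k = 2 * (μ k / 2) := fun k => by obtain ⟨c, hc⟩ := heven k; omega
  have hsl : ∑ k, μ k / 2 = d := by
    have h1 : ∑ k, 2 * (μ k / 2) = 2 * d := by
      rw [← hsum]; exact Finset.sum_congr rfl fun k _ => (hl k).symm
    rw [← Finset.mul_sum] at h1
    omega
  by_cases hj : μ j = 0
  · rw [if_neg (by simpa using hj)]
    apply Finset.sum_eq_zero
    intro i _
    rw [if_neg]
    rintro ⟨-, h2⟩
    apply h2
    omega
  · rw [if_pos hj]
    have h1j : 1 ≤ μ j / 2 := by have := hl j; omega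
    have hslν : ∑ k, (μ k / 2 - if k = j then 1 else 0) = d - 1 := by
      rw [sum_sub_single (fun k => μ k / 2) j 1 h1j, hsl]
    have hpos : 1 ≤ ∑ k, (μ k / 2 - if k = j then 1 else 0) := by omega
    rw [← pascal_sum (fun k => μ k / 2 - if k = j then 1 else 0) hpos]
    refine Finset.sum_congr rfl fun i _ => ?_
    beta_reduce
    have hcond : (μ i ≠ 0 ∧ μ j - (if j = i then 2 else 0) ≠ 0) ↔
        (μ i / 2 - if i = j then 1 else 0) ≠ 0 := by
      have hi := hl i; have hjj := hl j
      by_cases h : i = j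
      · subst h
        rw [if_pos rfl, if_pos rfl]
        omega
      · rw [if_neg (fun hh => h hh.symm), if_neg h]
        omega
    have hfun : (fun k => (μ k - if k = i then 2 else 0) / 2 - if k = j then 1 else 0)
        = fun k => (μ k / 2 - if k = j then 1 else 0) - if k = i then 1 else 0 := by
      funext k
      have := hl k
      split_ifs <;> omega
    rw [hfun]
    exact if_congr hcond rfl rfl

lemma Mp_step {n d : ℕ} (hd : 2 ≤ d) (μ : Fin n → ℕ) (hsum : ∑ i, μ i = 2 * d)
    (heven : ∀ i, Even (μ i)) :
    lap (Mp d μ) =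
      (((2 * d : ℕ) : ℝ) * ((2 * d - 1 : ℕ) : ℝ)) •
        ∑ i ∈ Finset.univ.filter (fun i => μ i ≠ 0),
          Mp (d - 1) (fun k => μ k - if k = i then 2 else 0) := by
  set c : ℝ := ((2 * d : ℕ) : ℝ) * ((2 * d - 1 : ℕ) : ℝ) with hc
  have hm : 2 * d - 2 = 2 * (d - 1) := by omega
  simp only [Mp]
  rw [lap_sub, Finset.smul_sum]
  have hsplit : ∀ i : Fin n,
      c • ((Nat.multinomial Finset.univ (fun k => μ k - if k = i then 2 else 0) : ℝ) •
          ∏ k, (X k : MvPolynomial (Fin n) ℝ) ^ (μ k - if k = i then 2 else 0) -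
        ∑ j ∈ Finset.univ.filter (fun j => (μ j - if j = i then 2 else 0) ≠ 0),
          (Nat.multinomial Finset.univ
            (fun k => (μ k - if k = i then 2 else 0) / 2 - if k = j then 1 else 0) : ℝ) •
            (X j : MvPolynomial (Fin n) ℝ) ^ (2 * (d - 1)))
      = (c * (Nat.multinomial Finset.univ (fun k => μ k - if k = i then 2 else 0) : ℝ)) •
          ∏ k, (X k : MvPolynomial (Fin n) ℝ) ^ (μ k - if k = i then 2 else 0) -
        c • ∑ j ∈ Finset.univ.filter (fun j => (μ j - if j = i then 2 else 0) ≠ 0),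
          (Nat.multinomial Finset.univ
            (fun k => (μ k - if k = i then 2 else 0) / 2 - if k = j then 1 else 0) : ℝ) •
            (X j : MvPolynomial (Fin n) ℝ) ^ (2 * (d - 1)) := by
    intro i
    rw [smul_sub, smul_smul]
  rw [Finset.sum_congr rfl (fun i _ => hsplit i), Finset.sum_sub_distrib]
  congr 1
  -- E1
  · rw [prod_X_pow, lap_smul, lap_monomial, Finset.smul_sum, Finset.sum_filter]
    refine Finset.sum_congr rfl fun i _ => ?_
    simp only [toF_apply]
    by_cases h : μ i = 0
    · rw [if_neg (not_not.mpr h)]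
      simp [h]
    · rw [if_pos h, prod_X_pow, toF_sub, smul_monomial, smul_monomial]
      congr 1
      have h2 : 2 ≤ μ i := by obtain ⟨c', hc'⟩ := heven i; omega
      have hA := multA μ i h2
      rw [hsum] at hA
      simp only [smul_eq_mul]
      linear_combination hA
  -- E2
  · rw [lap_sum, Finset.sum_filter, Finset.sum_filter]
    have step1 : ∀ i : Fin n,
        (if μ i ≠ 0 then
          c • ∑ j ∈ Finset.univ.filter (fun j => (μ j - if j = i then 2 else 0) ≠ 0),
            (Nat.multinomial Finset.univ
              (fun k => (μ k - if k = i then 2 else 0) / 2 - if k = j then 1 else 0) : ℝ) •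
              (X j : MvPolynomial (Fin n) ℝ) ^ (2 * (d - 1)) else 0)
        = ∑ j, (if μ i ≠ 0 ∧ (μ j - if j = i then 2 else 0) ≠ 0 then
            (c * (Nat.multinomial Finset.univ
              (fun k => (μ k - if k = i then 2 else 0) / 2 - if k = j then 1 else 0) : ℝ)) •
              (X j : MvPolynomial (Fin n) ℝ) ^ (2 * (d - 1)) else 0) := by
      intro i
      by_cases h : μ i = 0
      · rw [if_neg (not_not.mpr h)]
        symm
        apply Finset.sum_eq_zero
        intro j _
        rw [if_neg (by tauto)]
      · rw [if_pos h, Finset.smul_sum, Finset.sum_filter]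
        refine Finset.sum_congr rfl fun j _ => ?_
        by_cases h2 : (μ j - if j = i then 2 else 0) = 0
        · rw [if_neg (not_not.mpr h2), if_neg (by tauto)]
        · rw [if_pos h2, if_pos ⟨h, h2⟩, smul_smul]
    rw [show (∑ j, if μ j ≠ 0 then lap ((Nat.multinomial Finset.univ
          (fun k => μ k / 2 - if k = j then 1 else 0) : ℝ) •
          (X j : MvPolynomial (Fin n) ℝ) ^ (2 * d)) else 0) =
        ∑ j, (if μ j ≠ 0 then (c * (Nat.multinomial Finset.univ
          (fun k => μ k / 2 - if k = j then 1 else 0) : ℝ)) else 0) •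
          (X j : MvPolynomial (Fin n) ℝ) ^ (2 * (d - 1)) from
      Finset.sum_congr rfl fun j _ => by
        by_cases h : μ j = 0
        · simp [h]
        · rw [if_pos (by simpa using h), if_pos (by simpa using h), lap_smul, lap_X_pow, hm,
            smul_smul, mul_comm]]
    rw [Finset.sum_congr rfl (fun i _ => step1 i), Finset.sum_comm]
    refine Finset.sum_congr rfl fun j _ => ?_
    have e1 : ∀ i : Fin n,
        (if μ i ≠ 0 ∧ (μ j - if j = i then 2 else 0) ≠ 0 then
          (c * (Nat.multinomial Finset.univ
            (fun k => (μ k - if k = i then 2 else 0) / 2 - if k = j then 1 else 0) : ℝ)) •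
            (X j : MvPolynomial (Fin n) ℝ) ^ (2 * (d - 1)) else 0)
        = (c * (if μ i ≠ 0 ∧ (μ j - if j = i then 2 else 0) ≠ 0 then
            (Nat.multinomial Finset.univ
              (fun k => (μ k - if k = i then 2 else 0) / 2 - if k = j then 1 else 0) : ℝ) else 0)) •
            (X j : MvPolynomial (Fin n) ℝ) ^ (2 * (d - 1)) := by
      intro i
      split_ifs <;> simp
    rw [Finset.sum_congr rfl (fun i _ => e1 i), ← Finset.sum_smul, ← Finset.mul_sum,
      claimB hd μ hsum heven j, mul_ite, mul_zero]

lemma lap_iter_smul {n : ℕ} (k : ℕ) (a : ℝ) (p : MvPolynomial (Fin n) ℝ) :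
    lap^[k] (a • p) = a • lap^[k] p := by
  induction k generalizing p with
  | zero => rfl
  | succ k ih => rw [Function.iterate_succ_apply, Function.iterate_succ_apply, lap_smul, ih]

lemma lap_iter_sum {n : ℕ} {α : Type*} (k : ℕ) (s : Finset α) (f : α → MvPolynomial (Fin n) ℝ) :
    lap^[k] (∑ i ∈ s, f i) = ∑ i ∈ s, lap^[k] (f i) := by
  induction k generalizing f with
  | zero => rfl
  | succ k ih =>
    rw [Function.iterate_succ_apply, lap_sum, ih]
    exact Finset.sum_congr rfl fun i _ => by rw [Function.iterate_succ_apply]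

lemma Mp_main {n : ℕ} : ∀ (e : ℕ) (μ : Fin n → ℕ), ∑ i, μ i = 2 * (e + 1) →
    (∀ i, Even (μ i)) → lap^[e] (Mp (e + 1) μ) = 0 := by
  intro e
  induction e with
  | zero =>
    intro μ hs he
    simpa using Mp_base μ (by omega) he
  | succ e ih =>
    intro μ hs he
    rw [Function.iterate_succ_apply,
      Mp_step (d := e + 2) (by omega) μ (by omega) he, lap_iter_smul, lap_iter_sum]
    have hz : ∀ i ∈ Finset.univ.filter (fun i => μ i ≠ 0),
        lap^[e] (Mp (e + 2 - 1) (fun k => μ k - if k = i then 2 else 0)) = 0 := by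
      intro i hi
      have hi' : μ i ≠ 0 := (Finset.mem_filter.mp hi).2
      have h2 : 2 ≤ μ i := by obtain ⟨t, ht⟩ := he i; omega
      have hsum' : ∑ k, (μ k - if k = i then 2 else 0) = 2 * (e + 1) := by
        rw [sum_sub_single μ i 2 h2, hs]; omega
      have heven' : ∀ k, Even (μ k - if k = i then 2 else 0) := by
        intro k
        obtain ⟨t, ht⟩ := he k
        exact ⟨if k = i then t - 1 else t, by split_ifs <;> omega⟩
      have := ih (fun k => μ k - if k = i then 2 else 0) hsum' heven'
      simpa using this
    rw [Finset.sum_congr rfl hz, Finset.sum_const_zero, smul_zero]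

/-- **Statement 7.** If `μ ∈ ℕ₀ⁿ` sums to `2d` and all entries of `μ` are even, then the
polynomial `m_μ = binom(2d,μ)·xᵘ − ∑_{i : μᵢ ≠ 0} binom(d−1, μ/2 − εᵢ)·xᵢ^{2d}`
satisfies `Δ^{d−1}(m_μ) = 0`. -/
theorem stmt7 {n d : ℕ} (hd : 1 ≤ d) (μ : Fin n → ℕ) (hsum : ∑ i, μ i = 2 * d)
    (heven : ∀ i, Even (μ i)) :
    lap^[d - 1]
      ((Nat.multinomial Finset.univ μ : ℝ) • ∏ i, (X i : MvPolynomial (Fin n) ℝ) ^ μ i -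
        ∑ i ∈ Finset.univ.filter (fun i => μ i ≠ 0),
          (Nat.multinomial Finset.univ (fun j => μ j / 2 - if j = i then 1 else 0) : ℝ) •
            (X i : MvPolynomial (Fin n) ℝ) ^ (2 * d)) = 0 := by
  obtain ⟨e, rfl⟩ : ∃ e, d = e + 1 := ⟨d - 1, by omega⟩
  have := Mp_main e μ hsum heven
  simpa [Mp] using this
end

section
/- For n ≥ 1 and d ≥ 1, the kernel of the (d−1)-st power of the Laplacian restricted to homogeneous polynomials of degree 2d has dimension dim ker(Δ^{d−1}|_{V_{2d}^n}) = binom(n+2d−1, n−1) − binom(n+1, 2); equivalently, the linear map Δ^{d−1} : V_{2d}^n → V_2^n is surjective. -/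
/-!
`Δ` lowers degrees by two, so `Δ^e` maps `V_{2e+2}` into `V_2`. Conversely `V_2` is spanned by
the monomials `xᵢ xⱼ`, and `Δ^e (xᵢ^{2e+1} xⱼ)` is a nonzero multiple of `xᵢ xⱼ`: at each step only
`∂²/∂xᵢ²` survives, because every other variable occurs with exponent at most one. Hence
`Δ^e : V_{2e+2} → V_2` is onto, and rank–nullity with `dim V_k = binom(n+k−1, k)` gives the kernel.
-/

open MvPolynomial

/-- The Laplacian `Δ = ∑ i, ∂²/∂xᵢ²` as a linear endomorphism of `ℝ[x₁,…,xₙ]`. -/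
noncomputable def lapLM (n : ℕ) :
    MvPolynomial (Fin n) ℝ →ₗ[ℝ] MvPolynomial (Fin n) ℝ :=
  ∑ i, ((pderiv i).toLinearMap ∘ₗ (pderiv i).toLinearMap)

open Finsupp

namespace MvPolynomial

theorem homogeneousSubmodule_eq_span_monomial (σ R : Type*) [CommSemiring R] (k : ℕ) :
    homogeneousSubmodule σ R k =
      Submodule.span R ((fun d ↦ monomial d 1) '' {d : σ →₀ ℕ | d.degree = k}) := by
  rw [homogeneousSubmodule_eq_finsupp_supported, AddMonoidAlgebra.supported_eq_span_single]
  rfl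

instance (σ R : Type*) [Finite σ] [CommSemiring R] (k : ℕ) :
    Module.Finite R (homogeneousSubmodule σ R k) :=
  Module.Finite.iff_fg.mpr (homogeneousSubmodule_fg σ R k)

theorem finrank_homogeneousSubmodule (σ K : Type*) [Fintype σ] [Field K] (k : ℕ) :
    Module.finrank K (homogeneousSubmodule σ K k) = (Fintype.card σ).multichoose k := by
  classical
  have hdeg : {d : σ →₀ ℕ | d.degree = k} = ↑((Finset.univ : Finset σ).finsuppAntidiag k) := by
    ext d; simp [degree_eq_sum]
  rw [homogeneousSubmodule_eq_finsupp_supported, hdeg,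
    (AddMonoidAlgebra.supportedEquivFinsupp _).finrank_eq, Module.finrank_finsupp_self]
  simp [Finset.card_finsuppAntidiag_nat_eq_multichoose]

theorem exists_eq_single_add_single_of_degree_eq_two {σ : Type*} {s : σ →₀ ℕ}
    (hs : s.degree = 2) : ∃ i j, s = single i 1 + single j 1 := by
  classical
  have hcard : Multiset.card (toMultiset s) = 2 := by rwa [card_toMultiset]
  obtain ⟨i, j, hij⟩ := Multiset.card_eq_two.mp hcard
  refine ⟨i, j, ?_⟩
  rw [← toMultiset_toFinsupp s, hij, Multiset.insert_eq_cons, ← Multiset.singleton_add, map_add,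
    Multiset.toFinsupp_singleton, Multiset.toFinsupp_singleton]

end MvPolynomial

theorem lapLM_apply {n : ℕ} (p : MvPolynomial (Fin n) ℝ) :
    lapLM n p = ∑ k, pderiv k (pderiv k p) := by
  simp [lapLM]

theorem lapLM_monomial {n : ℕ} (t : Fin n →₀ ℕ) (r : ℝ) :
    lapLM n (monomial t r) =
      ∑ k, monomial (t - single k 1 - single k 1) (r * t k * (t k - 1 : ℕ)) := by
  simp only [lapLM_apply, pderiv_monomial, tsub_apply, single_eq_same]

theorem isHomogeneous_lapLM_pow {n m : ℕ} {p : MvPolynomial (Fin n) ℝ}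
    (hp : p.IsHomogeneous m) (e : ℕ) : ((lapLM n ^ e) p).IsHomogeneous (m - 2 * e) := by
  induction e with
  | zero => simpa using hp
  | succ e ih =>
    rw [pow_succ', Module.End.mul_apply, lapLM_apply,
      show m - 2 * (e + 1) = m - 2 * e - 1 - 1 by omega]
    exact IsHomogeneous.sum _ _ _ fun k _ ↦ ih.pderiv.pderiv

theorem exists_lapLM_monomial_eq_smul {n : ℕ} (i j : Fin n) (a : ℕ) :
    ∃ c : ℝ, c ≠ 0 ∧ lapLM n (monomial (single i (a + 2) + single j 1) 1)
      = c • monomial (single i a + single j 1) 1 := by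
  set t : Fin n →₀ ℕ := single i (a + 2) + single j 1 with ht
  have hti : a + 2 ≤ t i := by simp [ht]
  have htk : ∀ k ≠ i, t k ≤ 1 := fun k hk ↦ by
    simp only [ht, Finsupp.add_apply, single_apply, if_neg hk.symm]; split_ifs <;> omega
  have hexp : t - single i 1 - single i 1 = single i a + single j 1 := by
    ext k
    simp only [ht, tsub_apply, Finsupp.add_apply, single_apply]
    split_ifs <;> omega
  refine ⟨t i * (t i - 1 : ℕ), mul_ne_zero (by norm_cast; omega) (by norm_cast; omega), ?_⟩
  rw [lapLM_monomial, Finset.sum_eq_single_of_mem i (Finset.mem_univ i) fun k _ hk ↦ ?_,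
    smul_monomial, smul_eq_mul, mul_one, one_mul, hexp]
  rw [Nat.sub_eq_zero_of_le (htk k hk)]
  simp

theorem exists_lapLM_pow_monomial_eq_smul {n : ℕ} (i j : Fin n) (e : ℕ) :
    ∃ c : ℝ, c ≠ 0 ∧ (lapLM n ^ e) (monomial (single i (2 * e + 1) + single j 1) 1)
      = c • monomial (single i 1 + single j 1) 1 := by
  induction e with
  | zero => exact ⟨1, one_ne_zero, by simp⟩
  | succ e ih =>
    obtain ⟨c, hc, hce⟩ := ih
    obtain ⟨c', hc', hstep⟩ := exists_lapLM_monomial_eq_smul i j (2 * e + 1)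
    refine ⟨c * c', mul_ne_zero hc hc', ?_⟩
    rw [show 2 * (e + 1) + 1 = 2 * e + 1 + 2 by ring, pow_succ, Module.End.mul_apply, hstep,
      map_smul, hce, smul_smul, mul_comm]

theorem map_lapLM_pow_homogeneousSubmodule (n e : ℕ) :
    (homogeneousSubmodule (Fin n) ℝ (2 * (e + 1))).map (lapLM n ^ e) =
      homogeneousSubmodule (Fin n) ℝ 2 := by
  refine le_antisymm (Submodule.map_le_iff_le_comap.mpr fun p hp ↦ ?_) ?_
  · simpa [mul_add] using isHomogeneous_lapLM_pow hp e
  rw [homogeneousSubmodule_eq_span_monomial (Fin n) ℝ 2, Submodule.span_le]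
  rintro _ ⟨s, hs, rfl⟩
  obtain ⟨i, j, rfl⟩ := exists_eq_single_add_single_of_degree_eq_two hs
  obtain ⟨c, hc, hce⟩ := exists_lapLM_pow_monomial_eq_smul i j e
  refine ⟨c⁻¹ • monomial (single i (2 * e + 1) + single j 1) 1,
    Submodule.smul_mem _ _ (isHomogeneous_monomial _ ?_), ?_⟩
  · simp only [map_add, degree_single]; ring
  · rw [map_smul, hce, smul_smul, inv_mul_cancel₀ hc, one_smul]

/-- **Statement 9.** For `n, d ≥ 1`, the kernel of `Δ^{d−1}` restricted to the space
`V_{2d}ⁿ` of homogeneous polynomials of degree `2d` has dimension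
`binom(n+2d−1, n−1) − binom(n+1, 2)`; equivalently, `Δ^{d−1} : V_{2d}ⁿ → V_2ⁿ`
is surjective. -/
theorem stmt9 {n d : ℕ} (hn : 1 ≤ n) (hd : 1 ≤ d) :
    Module.finrank ℝ
        (LinearMap.ker ((lapLM n ^ (d - 1)).domRestrict
          (homogeneousSubmodule (Fin n) ℝ (2 * d)))) =
      Nat.choose (n + 2 * d - 1) (n - 1) - Nat.choose (n + 1) 2 ∧
    ∀ q ∈ homogeneousSubmodule (Fin n) ℝ 2,
      ∃ p ∈ homogeneousSubmodule (Fin n) ℝ (2 * d), (lapLM n ^ (d - 1)) p = q := by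
  obtain ⟨e, rfl⟩ : ∃ e, d = e + 1 := ⟨d - 1, by omega⟩
  have hmap := map_lapLM_pow_homogeneousSubmodule n e
  rw [Nat.add_sub_cancel]
  refine ⟨?_, fun q hq ↦ Submodule.mem_map.mp (hmap ▸ hq)⟩
  have hrank := LinearMap.finrank_range_add_finrank_ker
    ((lapLM n ^ e).domRestrict (homogeneousSubmodule (Fin n) ℝ (2 * (e + 1))))
  rw [LinearMap.range_domRestrict, hmap, finrank_homogeneousSubmodule,
    finrank_homogeneousSubmodule, Fintype.card_fin, Nat.multichoose_eq, Nat.multichoose_eq] at hrank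
  rw [← Nat.choose_symm_of_eq_add (by omega : n + 2 * (e + 1) - 1 = 2 * (e + 1) + (n - 1)),
    show n + 1 = n + 2 - 1 by rfl]
  omega
end
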